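/- Let K be a field, S a finite-dimensional K-algebra, and M a finite-dimensional S-S-bimodule. Let D(M) = Hom_K(M,K) be the dual S-S-bimodule, with actions (s·φ)(m) = φ(ms) and (φ·s)(m) = φ(sm) for s ∈ S, m ∈ M, φ ∈ D(M). Then there is a K-algebra isomorphism T(S ⋉ M) ≅ T(S ⋉ D(M)) between the trivial extensions of the algebras S ⋉ M and S ⋉ D(M). -/

import Mathlib

open MulOpposite

section DualBimodule

variable (K : Type*) [Field K] (S : Type*) [Ring S] [Algebra K S]
variable (M : Type*) [AddCommGroup M] [Module K M] [Module S M] [Module Sᵐᵒᵖ M]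
  [SMulCommClass S Sᵐᵒᵖ M] [IsScalarTower K S M] [IsScalarTower K Sᵐᵒᵖ M]

/-- Right action of `s : S` on `M`, as a `K`-linear endomorphism. -/
noncomputable def rAct (s : S) : M →ₗ[K] M where
  toFun m := op s • m
  map_add' _ _ := smul_add _ _ _
  map_smul' k m := (smul_comm (op s) k m)

/-- Left action of `s : S` on `M`, as a `K`-linear endomorphism. -/
noncomputable def lAct (s : S) : M →ₗ[K] M where
  toFun m := s • m
  map_add' _ _ := smul_add _ _ _
  map_smul' k m := (smul_comm s k m)

/-- The left `S`-module structure on the dual `Hom_K(M, K)`: `(s • φ) m = φ (m • s)`. -/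
noncomputable instance dualModuleLeft : Module S (M →ₗ[K] K) where
  smul s φ := φ ∘ₗ rAct K S M s
  one_smul φ := LinearMap.ext fun m => by
    show φ (op (1 : S) • m) = φ m
    rw [op_one, one_smul]
  mul_smul s t φ := LinearMap.ext fun m => by
    show φ (op (s * t) • m) = φ (op t • op s • m)
    rw [op_mul, mul_smul]
  smul_zero s := rfl
  smul_add s φ ψ := rfl
  add_smul s t φ := LinearMap.ext fun m => by
    show φ (op (s + t) • m) = φ (op s • m) + φ (op t • m)
    rw [op_add, add_smul, map_add]
  zero_smul φ := LinearMap.ext fun m => by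
    show φ (op (0 : S) • m) = 0
    rw [op_zero, zero_smul, map_zero]

/-- The right `S`-module structure on the dual `Hom_K(M, K)`: `(φ • s) m = φ (s • m)`. -/
noncomputable instance dualModuleRight : Module Sᵐᵒᵖ (M →ₗ[K] K) where
  smul s φ := φ ∘ₗ lAct K S M s.unop
  one_smul φ := LinearMap.ext fun m => by
    show φ ((1 : Sᵐᵒᵖ).unop • m) = φ m
    rw [unop_one, one_smul]
  mul_smul s t φ := LinearMap.ext fun m => by
    show φ ((s * t).unop • m) = φ (t.unop • s.unop • m)
    rw [unop_mul, mul_smul]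
  smul_zero s := rfl
  smul_add s φ ψ := rfl
  add_smul s t φ := LinearMap.ext fun m => by
    show φ ((s + t).unop • m) = φ (s.unop • m) + φ (t.unop • m)
    rw [unop_add, add_smul, map_add]
  zero_smul φ := LinearMap.ext fun m => by
    show φ ((0 : Sᵐᵒᵖ).unop • m) = 0
    rw [unop_zero, zero_smul, map_zero]

noncomputable instance dualSMulCommClass : SMulCommClass S Sᵐᵒᵖ (M →ₗ[K] K) where
  smul_comm s t φ := LinearMap.ext fun m => by
    show φ (t.unop • op s • m) = φ (op s • t.unop • m)
    rw [smul_comm]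

noncomputable instance dualIsScalarTowerLeft : IsScalarTower K S (M →ₗ[K] K) where
  smul_assoc k s φ := LinearMap.ext fun m => by
    show φ (op (k • s) • m) = k • φ (op s • m)
    rw [op_smul, smul_assoc, map_smul]

noncomputable instance dualIsScalarTowerRight : IsScalarTower K Sᵐᵒᵖ (M →ₗ[K] K) where
  smul_assoc k t φ := LinearMap.ext fun m => by
    show φ ((k • t).unop • m) = k • φ (t.unop • m)
    rw [unop_smul, smul_assoc, map_smul]

end DualBimodule

/-!
Write `D = Hom_K(-, K)`. As vector spaces `T(S ⋉ M) = (S ⊕ M) ⊕ (D S ⊕ D M)` and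
`T(S ⋉ D M) = (S ⊕ D M) ⊕ (D S ⊕ D D M)`. The isomorphism fixes `S` and `D S`, moves the summand
`D M` from the dual part into the algebra part, and moves `M` into the dual part via `M ≅ D D M`.
It is multiplicative because `M` and `D M` multiply with each other only through the pairings
into `D S`, `(m, φ) ↦ (t ↦ φ (t m))` and `(φ, m) ↦ (t ↦ φ (m t))`, and these are the same
whichever of `M`, `D M` is regarded as the dual of the other.
-/

open TrivSqZeroExt

abbrev TrivialExtension (K A : Type*) [Field K] [Ring A] [Algebra K A] :=
  TrivSqZeroExt A (A →ₗ[K] K)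

namespace TrivSqZeroExt

theorem map_inl_fst_add_map_inr_snd {R M N F : Type*} [AddZeroClass R] [AddZeroClass M]
    [AddZeroClass N] [FunLike F (TrivSqZeroExt R M) N] [AddHomClass F (TrivSqZeroExt R M) N]
    (f : F) (x : TrivSqZeroExt R M) : f (inl x.fst) + f (inr x.snd) = f x := by
  rw [← map_add, inl_fst_add_inr_snd_eq]

variable {K R M P : Type*} [CommSemiring K] [AddCommMonoid R] [Module K R]
  [AddCommMonoid M] [Module K M] [AddCommMonoid P] [Module K P]

def linearCoprod (f : R →ₗ[K] P) (g : M →ₗ[K] P) : TrivSqZeroExt R M →ₗ[K] P where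
  toFun x := f x.fst + g x.snd
  map_add' x y := by simp only [fst_add, snd_add, map_add, add_add_add_comm]
  map_smul' k x := by simp

@[simp]
theorem linearCoprod_apply (f : R →ₗ[K] P) (g : M →ₗ[K] P) (x : TrivSqZeroExt R M) :
    linearCoprod f g x = f x.fst + g x.snd := rfl

end TrivSqZeroExt

section DualAction

variable {K S M : Type*} [Field K] [Ring S] [Algebra K S] [AddCommGroup M] [Module K M]

@[simp]
theorem dual_smul_apply [Module Sᵐᵒᵖ M] [IsScalarTower K Sᵐᵒᵖ M] (s : S) (φ : M →ₗ[K] K)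
    (m : M) : (s • φ) m = φ (op s • m) :=
  rfl

@[simp]
theorem dual_op_smul_apply [Module S M] [IsScalarTower K S M] (s : Sᵐᵒᵖ) (φ : M →ₗ[K] K)
    (m : M) : (s • φ) m = φ (s.unop • m) :=
  rfl

end DualAction

namespace TrivialExtension

variable (K : Type*) [Field K] (S : Type*) [Ring S] [Algebra K S]
  (M : Type*) [AddCommGroup M] [Module K M] [Module S M] [Module Sᵐᵒᵖ M]
  [SMulCommClass S Sᵐᵒᵖ M] [IsScalarTower K S M] [IsScalarTower K Sᵐᵒᵖ M]

noncomputable def dualSwap : TrivialExtension K (TrivSqZeroExt S M) →ₗ[K]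
    TrivialExtension K (TrivSqZeroExt S (M →ₗ[K] K)) where
  toFun x := inl (inl x.fst.fst + inr (x.snd ∘ₗ (inrHom S M).restrictScalars K)) +
    inr (linearCoprod (x.snd ∘ₗ (inlAlgHom K S M).toLinearMap) (Module.Dual.eval K M x.fst.snd))
  map_add' x y := by
    ext
    · simp
    · simp
    · simp
      abel
  map_smul' k x := by
    ext
    · simp
    · simp
    · simp [mul_add]

variable {K S M}

@[simp]
theorem dualSwap_fst_fst (x : TrivialExtension K (TrivSqZeroExt S M)) :
    (dualSwap K S M x).fst.fst = x.fst.fst := by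
  simp [dualSwap]

@[simp]
theorem dualSwap_fst_snd_apply (x : TrivialExtension K (TrivSqZeroExt S M)) (m : M) :
    (dualSwap K S M x).fst.snd m = x.snd (inr m) := by
  simp [dualSwap]

@[simp]
theorem dualSwap_snd_apply (x : TrivialExtension K (TrivSqZeroExt S M))
    (z : TrivSqZeroExt S (M →ₗ[K] K)) :
    (dualSwap K S M x).snd z = x.snd (inl z.fst) + z.snd x.fst.snd := by
  simp [dualSwap]

theorem dualSwap_one : dualSwap K S M 1 = 1 := by
  ext <;> simp

theorem dualSwap_mul (x y : TrivialExtension K (TrivSqZeroExt S M)) :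
    dualSwap K S M (x * y) = dualSwap K S M x * dualSwap K S M y := by
  induction x using TrivSqZeroExt.ind with | _ a f
  induction a using TrivSqZeroExt.ind with | _ s m
  induction y using TrivSqZeroExt.ind with | _ b g
  induction b using TrivSqZeroExt.ind with | _ t n
  ext
  · simp
  · simp [add_mul, mul_add, inl_mul_inr, inr_mul_inl]
  · simp [add_mul, mul_add, inl_mul_inr, inr_mul_inl]
    abel

variable (K S M) [Module.IsReflexive K M]

noncomputable def dualSwapInv : TrivialExtension K (TrivSqZeroExt S (M →ₗ[K] K)) →ₗ[K]
    TrivialExtension K (TrivSqZeroExt S M) where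
  toFun y := inl (inl y.fst.fst +
      inr ((Module.evalEquiv K M).symm (y.snd ∘ₗ (inrHom S (M →ₗ[K] K)).restrictScalars K))) +
    inr (linearCoprod (y.snd ∘ₗ (inlAlgHom K S (M →ₗ[K] K)).toLinearMap) y.fst.snd)
  map_add' x y := by
    ext
    · simp
    · simp [LinearMap.add_comp]
    · simp
      abel
  map_smul' k x := by
    ext
    · simp
    · simp [LinearMap.smul_comp]
    · simp [mul_add]

variable {K S M}

@[simp]
theorem dualSwapInv_fst_fst (y : TrivialExtension K (TrivSqZeroExt S (M →ₗ[K] K))) :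
    (dualSwapInv K S M y).fst.fst = y.fst.fst := by
  simp [dualSwapInv]

@[simp]
theorem apply_dualSwapInv_fst_snd (y : TrivialExtension K (TrivSqZeroExt S (M →ₗ[K] K)))
    (φ : M →ₗ[K] K) : φ (dualSwapInv K S M y).fst.snd = y.snd (inr φ) := by
  simp [dualSwapInv]

@[simp]
theorem dualSwapInv_snd_apply (y : TrivialExtension K (TrivSqZeroExt S (M →ₗ[K] K)))
    (z : TrivSqZeroExt S M) :
    (dualSwapInv K S M y).snd z = y.snd (inl z.fst) + y.fst.snd z.snd := by
  simp [dualSwapInv]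

theorem dualSwapInv_dualSwap (x : TrivialExtension K (TrivSqZeroExt S M)) :
    dualSwapInv K S M (dualSwap K S M x) = x := by
  ext
  · simp
  · apply (Module.evalEquiv K M).injective
    ext
    simp
  · simp [map_inl_fst_add_map_inr_snd]

theorem dualSwap_dualSwapInv (y : TrivialExtension K (TrivSqZeroExt S (M →ₗ[K] K))) :
    dualSwap K S M (dualSwapInv K S M y) = y := by
  ext
  · simp
  · simp
  · simp [add_comm, map_inl_fst_add_map_inr_snd]

variable (K S M)

noncomputable def dualSwapAlgEquiv : TrivialExtension K (TrivSqZeroExt S M) ≃ₐ[K]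
    TrivialExtension K (TrivSqZeroExt S (M →ₗ[K] K)) :=
  AlgEquiv.ofLinearEquiv
    (.ofLinearMap (dualSwap K S M) (dualSwapInv K S M) (LinearMap.ext dualSwap_dualSwapInv)
      (LinearMap.ext dualSwapInv_dualSwap))
    dualSwap_one dualSwap_mul

end TrivialExtension

theorem trivialExtension_trivSqZeroExt_algEquiv_trivialExtension_dual_general
    (K : Type*) [Field K] (S : Type*) [Ring S] [Algebra K S]
    (M : Type*) [AddCommGroup M] [Module K M] [Module S M] [Module Sᵐᵒᵖ M]
    [SMulCommClass S Sᵐᵒᵖ M] [IsScalarTower K S M] [IsScalarTower K Sᵐᵒᵖ M]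
    [FiniteDimensional K M] :
    Nonempty
      ((TrivSqZeroExt (TrivSqZeroExt S M) (TrivSqZeroExt S M →ₗ[K] K)) ≃ₐ[K]
       (TrivSqZeroExt (TrivSqZeroExt S (M →ₗ[K] K))
          (TrivSqZeroExt S (M →ₗ[K] K) →ₗ[K] K))) :=
  ⟨TrivialExtension.dualSwapAlgEquiv K S M⟩

/-- Let `S` be a finite-dimensional `K`-algebra and `M` a finite-dimensional
`S`-`S`-bimodule, with `K`-dual bimodule `D(M) = Hom_K(M, K)` (where `(s • φ) m = φ (m • s)`
and `(φ • s) m = φ (s • m)`).  Then the trivial extensions `T(S ⋉ M)` and `T(S ⋉ D(M))` are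
isomorphic as `K`-algebras. -/
theorem trivialExtension_trivSqZeroExt_algEquiv_trivialExtension_dual
    (K : Type*) [Field K] (S : Type*) [Ring S] [Algebra K S]
    (M : Type*) [AddCommGroup M] [Module K M] [Module S M] [Module Sᵐᵒᵖ M]
    [SMulCommClass S Sᵐᵒᵖ M] [IsScalarTower K S M] [IsScalarTower K Sᵐᵒᵖ M]
    [FiniteDimensional K S] [FiniteDimensional K M] :
    Nonempty
      ((TrivSqZeroExt (TrivSqZeroExt S M) (TrivSqZeroExt S M →ₗ[K] K)) ≃ₐ[K]
       (TrivSqZeroExt (TrivSqZeroExt S (M →ₗ[K] K))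
          (TrivSqZeroExt S (M →ₗ[K] K) →ₗ[K] K))) :=
  trivialExtension_trivSqZeroExt_algEquiv_trivialExtension_dual_general K S M
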